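/- arXiv:2106.06956 — 2 statements merged into one kernel-verified Lean document; each statement's English description precedes it below -/
import Mathlib

section
/- Let k ≥ 3 be a natural number and let r be an integer coprime to k with 0 < r < k/2. Let L > 0 and let γ : ℝ → ℝ² be a C²-smooth, L-periodic map, injective on [0, L), whose image is the boundary of a strictly convex body, and which satisfies [γ(t), γ'(t)] = 1 for all t ∈ ℝ. Let A : ℝ² → ℝ² be a linear map of exact order k that maps the image of γ onto itself. Then there exists a natural number m coprime to k such that A^m(γ(t)) = γ(t + L·r/k) for all t ∈ ℝ; in particular B = A^m also has exact order k. -/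
/-!
Since `γ` is periodic and injective on a period, it descends to a homeomorphism from the circle
`ℝ/Lℤ` onto its image, so `A ∘ γ` lifts through the covering `ℝ → ℝ/Lℤ` to a continuous `ψ` with
`γ ∘ ψ = A ∘ γ`. Pairing this relation with `[γ (ψ t), ·]` and differentiating, the normalisation
`[γ, γ'] = 1` gives `ψ' = det A`, so `ψ t = (det A) t + c`. As `det A` is a real root of unity and
`det A = -1` would make `A` an involution, `A` moves the parameter by the constant `c`.
Then `A ^ n = 1` exactly when `n c ∈ Lℤ`, so `c` has order `k` in `ℝ/Lℤ`, i.e. `c ≡ L m' / k` with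
`m'` prime to `k`, and the required power is `m ≡ r / m' (mod k)`.
-/

/-- The determinant of the 2×2 matrix whose columns are `u, v ∈ ℝ²`. -/
def det2 (u v : ℝ × ℝ) : ℝ := u.1 * v.2 - u.2 * v.1

open Function Set

lemma det2_eq_det_finTwoProd (u v : ℝ × ℝ) :
    det2 u v = (Module.Basis.finTwoProd ℝ).det ![u, v] := by
  simp only [det2, Module.Basis.det_apply, Matrix.det_fin_two, Module.Basis.toMatrix,
    Module.Basis.coe_finTwoProd_repr, Matrix.cons_val_zero, Matrix.cons_val_one,
    Matrix.cons_val_fin_one]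
  ring

lemma det2_map (A : (ℝ × ℝ) →ₗ[ℝ] ℝ × ℝ) (u v : ℝ × ℝ) :
    det2 (A u) (A v) = LinearMap.det A * det2 u v := by
  rw [det2_eq_det_finTwoProd, det2_eq_det_finTwoProd, ← Module.Basis.det_comp]
  congr 1
  funext i
  fin_cases i <;> rfl

lemma HasDerivAt.const_det2 {f : ℝ → ℝ × ℝ} {f' : ℝ × ℝ} {t : ℝ} (hf : HasDerivAt f f' t)
    (u : ℝ × ℝ) : HasDerivAt (fun s => det2 u (f s)) (det2 u f') t :=
  (u.1 • ContinuousLinearMap.snd ℝ ℝ ℝ - u.2 • ContinuousLinearMap.fst ℝ ℝ ℝ).hasFDerivAt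
    |>.comp_hasDerivAt t hf

lemma eq_det2_smul_add_det2_smul {v w : ℝ × ℝ} (h : det2 v w = 1) (u : ℝ × ℝ) :
    u = det2 u w • v + det2 v u • w := by
  simp only [det2] at h ⊢
  ext <;> simp only [Prod.fst_add, Prod.snd_add, Prod.smul_fst, Prod.smul_snd, smul_eq_mul]
  · linear_combination (-u.1) * h
  · linear_combination (-u.2) * h

lemma LinearMap.eq_one_of_apply_eq_self_of_det2_eq_one {B : (ℝ × ℝ) →ₗ[ℝ] ℝ × ℝ}
    {v w : ℝ × ℝ} (h : det2 v w = 1) (hv : B v = v) (hw : B w = w) : B = 1 := by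
  refine LinearMap.ext fun u => ?_
  rw [eq_det2_smul_add_det2_smul h u, map_add, map_smul, map_smul, hv, hw, Module.End.one_apply]

section Curve

variable {γ : ℝ → ℝ × ℝ}

lemma LinearMap.hasDerivAt_comp (A : (ℝ × ℝ) →ₗ[ℝ] ℝ × ℝ) {t : ℝ}
    (hγ : DifferentiableAt ℝ γ t) : HasDerivAt (fun s => A (γ s)) (A (deriv γ t)) t :=
  A.toContinuousLinearMap.hasFDerivAt.comp_hasDerivAt t hγ.hasDerivAt

lemma eq_one_of_forall_apply_eq_self (hγ : Differentiable ℝ γ)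
    (hdet : ∀ t, det2 (γ t) (deriv γ t) = 1) {B : (ℝ × ℝ) →ₗ[ℝ] ℝ × ℝ}
    (hB : ∀ t, B (γ t) = γ t) : B = 1 := by
  have hBγ' : B (deriv γ 0) = deriv γ 0 := by
    have h := B.hasDerivAt_comp (hγ 0)
    simp only [hB] at h
    exact h.unique (hγ 0).hasDerivAt
  exact LinearMap.eq_one_of_apply_eq_self_of_det2_eq_one (hdet 0) (hB 0) hBγ'

lemma hasDerivAt_det_of_lift (hγ : Differentiable ℝ γ) (hdet : ∀ t, det2 (γ t) (deriv γ t) = 1)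
    (A : (ℝ × ℝ) →ₗ[ℝ] ℝ × ℝ) {ψ : ℝ → ℝ} (hlift : ∀ s, γ (ψ s) = A (γ s)) {t : ℝ}
    (hψ : ContinuousAt ψ t) : HasDerivAt ψ (LinearMap.det A) t := by
  -- `s ↦ [γ (ψ t), γ s]` has derivative `1` at `ψ t`, and composed with `ψ` it is
  -- `s ↦ [γ (ψ t), A (γ s)]`, whose derivative at `t` is `[A (γ t), A (γ' t)] = det A`.
  have hH := (hγ (ψ t)).hasDerivAt.const_det2 (γ (ψ t))
  have hR := (A.hasDerivAt_comp (hγ t)).const_det2 (γ (ψ t))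
  rw [hdet] at hH
  rw [hlift, det2_map, hdet, mul_one] at hR
  simpa using HasDerivAt.of_comp_left hψ hH hR one_ne_zero
    (Filter.Eventually.of_forall fun s => by simp [hlift])

lemma lift_eq_det_mul_add (hγ : Differentiable ℝ γ) (hdet : ∀ t, det2 (γ t) (deriv γ t) = 1)
    (A : (ℝ × ℝ) →ₗ[ℝ] ℝ × ℝ) {ψ : ℝ → ℝ} (hlift : ∀ s, γ (ψ s) = A (γ s))
    (hψ : Continuous ψ) (t : ℝ) : ψ t = LinearMap.det A * t + ψ 0 := by
  have hderiv (s : ℝ) : HasDerivAt (fun s => ψ s - LinearMap.det A * s) 0 s := by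
    have h := (hasDerivAt_det_of_lift hγ hdet A hlift hψ.continuousAt).sub
      ((hasDerivAt_id' s).const_mul (LinearMap.det A))
    rwa [mul_one, sub_self] at h
  have hconst := is_const_of_deriv_eq_zero (fun s => (hderiv s).differentiableAt)
    (fun s => (hderiv s).deriv) t 0
  simp only [mul_zero, sub_zero] at hconst
  linarith

end Curve

section PeriodicCurve

variable {X : Type*} {L : ℝ} [Fact (0 < L)] {γ : ℝ → X}

lemma Function.Periodic.lift_injective (hper : Periodic γ L) (hinj : InjOn γ (Ico 0 L)) :
    Injective hper.lift := by
  intro p q hpq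
  have hrep (p : AddCircle L) : ((AddCircle.equivIco L 0 p : ℝ) : AddCircle L) = p :=
    (AddCircle.equivIco L 0).symm_apply_apply p
  have hmem (p : AddCircle L) : (AddCircle.equivIco L 0 p : ℝ) ∈ Ico 0 L := by
    simpa using (AddCircle.equivIco L 0 p).2
  rw [← hrep p, ← hrep q] at hpq ⊢
  rw [hinj (hmem p) (hmem q) hpq]

lemma Function.Periodic.apply_eq_apply_iff (hper : Periodic γ L) (hinj : InjOn γ (Ico 0 L))
    {a b : ℝ} : γ a = γ b ↔ (a : AddCircle L) = b :=
  ⟨fun h => hper.lift_injective hinj h, fun h => congrArg hper.lift h⟩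

lemma Function.Periodic.isClosedEmbedding_lift [TopologicalSpace X] [T2Space X]
    (hper : Periodic γ L) (hinj : InjOn γ (Ico 0 L)) (hcont : Continuous γ) :
    Topology.IsClosedEmbedding hper.lift :=
  Continuous.isClosedEmbedding (X := AddCircle L) (hcont.quotient_liftOn' _)
    (hper.lift_injective hinj)

lemma Function.Periodic.exists_continuous_lift [TopologicalSpace X] [T2Space X] {Y : Type*}
    [TopologicalSpace Y] [SimplyConnectedSpace Y] [LocallyPathConnectedSpace Y]
    (hper : Periodic γ L) (hinj : InjOn γ (Ico 0 L)) (hcont : Continuous γ) {f : Y → X}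
    (hf : Continuous f) (hrange : ∀ y, f y ∈ range γ) :
    ∃ ψ : Y → ℝ, Continuous ψ ∧ ∀ y, γ (ψ y) = f y := by
  choose φ hφ using hrange
  have hφcont : Continuous fun y => (φ y : AddCircle L) := by
    refine (hper.isClosedEmbedding_lift hinj hcont).continuous_iff.mpr ?_
    simpa [comp_def, hφ] using hf
  obtain ⟨ψ, ⟨-, hψ⟩, -⟩ := (AddCircle.isCoveringMap_coe L).existsUnique_continuousMap_lifts
    ⟨_, hφcont⟩ (Classical.arbitrary Y) (φ (Classical.arbitrary Y)) rfl
  refine ⟨ψ, ψ.continuous, fun y => ?_⟩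
  rw [← hφ y, hper.apply_eq_apply_iff hinj]
  exact congrFun hψ y

end PeriodicCurve

section Rotation

variable {L : ℝ} [Fact (0 < L)] {γ : ℝ → ℝ × ℝ} {A : (ℝ × ℝ) →ₗ[ℝ] ℝ × ℝ}

lemma exists_affine_lift (hper : Periodic γ L) (hinj : InjOn γ (Ico 0 L))
    (hγ : Differentiable ℝ γ) (hdet : ∀ t, det2 (γ t) (deriv γ t) = 1)
    (hA : ∀ t, A (γ t) ∈ range γ) : ∃ c, ∀ t, A (γ t) = γ (LinearMap.det A * t + c) := by
  obtain ⟨ψ, hψ, hlift⟩ : ∃ ψ : ℝ → ℝ, Continuous ψ ∧ ∀ t, γ (ψ t) = A (γ t) :=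
    hper.exists_continuous_lift hinj hγ.continuous
      (A.continuous_of_finiteDimensional.comp hγ.continuous) hA
  exact ⟨ψ 0, fun t => by rw [← hlift, lift_eq_det_mul_add hγ hdet A hlift hψ]⟩

lemma det_eq_one_of_forall_apply_eq (hγ : Differentiable ℝ γ)
    (hdet : ∀ t, det2 (γ t) (deriv γ t) = 1) {c : ℝ}
    (hc : ∀ t, A (γ t) = γ (LinearMap.det A * t + c)) {k : ℕ} (hk : k ≠ 0)
    (hAk : A ^ k = 1) (hA2 : A ^ 2 ≠ 1) : LinearMap.det A = 1 := by
  have hpow : LinearMap.det A ^ k = 1 := by rw [← map_pow, hAk, map_one]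
  rcases pow_eq_one_iff_cases.mp hpow with hk0 | hdet1 | ⟨hdet1, -⟩
  · exact absurd hk0 hk
  · exact hdet1
  -- `det A = -1`: `A` acts on parameters by the involution `t ↦ c - t`.
  · refine absurd (eq_one_of_forall_apply_eq_self hγ hdet fun t => ?_) hA2
    rw [pow_two, Module.End.mul_apply, hc, hc, hdet1]
    ring_nf

lemma exists_rotation (hper : Periodic γ L) (hinj : InjOn γ (Ico 0 L))
    (hγ : Differentiable ℝ γ) (hdet : ∀ t, det2 (γ t) (deriv γ t) = 1)
    (hA : ∀ t, A (γ t) ∈ range γ) {k : ℕ} (hk : k ≠ 0) (hAk : A ^ k = 1) (hA2 : A ^ 2 ≠ 1) :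
    ∃ c, ∀ t, A (γ t) = γ (t + c) := by
  obtain ⟨c, hc⟩ := exists_affine_lift hper hinj hγ hdet hA
  refine ⟨c, fun t => ?_⟩
  rw [hc, det_eq_one_of_forall_apply_eq hγ hdet hc hk hAk hA2, one_mul]

lemma pow_apply_eq_of_forall_apply_eq {c : ℝ} (hc : ∀ t, A (γ t) = γ (t + c)) (n : ℕ)
    (t : ℝ) : (A ^ n) (γ t) = γ (t + n * c) := by
  induction n generalizing t with
  | zero => simp
  | succ n ih =>
    rw [pow_succ, Module.End.mul_apply, hc, ih]
    push_cast
    ring_nf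

lemma pow_eq_one_iff_nsmul_eq_zero_of_forall_apply_eq (hper : Periodic γ L)
    (hinj : InjOn γ (Ico 0 L)) (hγ : Differentiable ℝ γ)
    (hdet : ∀ t, det2 (γ t) (deriv γ t) = 1) {c : ℝ}
    (hc : ∀ t, A (γ t) = γ (t + c)) (n : ℕ) : A ^ n = 1 ↔ n • (c : AddCircle L) = 0 := by
  have hshift (t : ℝ) : (A ^ n) (γ t) = γ t ↔ n • (c : AddCircle L) = 0 := by
    rw [pow_apply_eq_of_forall_apply_eq hc, hper.apply_eq_apply_iff hinj, AddCircle.coe_add,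
      ← nsmul_eq_mul, AddCircle.coe_nsmul, add_eq_left]
  refine ⟨fun h => (hshift 0).mp (by rw [h, Module.End.one_apply]), fun h => ?_⟩
  exact eq_one_of_forall_apply_eq_self hγ hdet fun t => (hshift t).mpr h

lemma orderOf_eq_addOrderOf_of_forall_apply_eq (hper : Periodic γ L)
    (hinj : InjOn γ (Ico 0 L)) (hγ : Differentiable ℝ γ)
    (hdet : ∀ t, det2 (γ t) (deriv γ t) = 1) {c : ℝ}
    (hc : ∀ t, A (γ t) = γ (t + c)) : orderOf A = addOrderOf (c : AddCircle L) := by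
  have h := pow_eq_one_iff_nsmul_eq_zero_of_forall_apply_eq hper hinj hγ hdet hc
  exact Nat.dvd_antisymm (orderOf_dvd_of_pow_eq_one ((h _).mpr (addOrderOf_nsmul_eq_zero _)))
    (addOrderOf_dvd_of_nsmul_eq_zero ((h _).mp (pow_orderOf_eq_one A)))

end Rotation

lemma AddCircle.exists_coprime_nsmul_eq {L : ℝ} [Fact (0 < L)] {u : AddCircle L} {k : ℕ}
    (hk : 0 < k) (hu : addOrderOf u = k) {r : ℤ} (hr : IsCoprime r k) :
    ∃ m : ℕ, m.Coprime k ∧ m • u = ((L * r / k : ℝ) : AddCircle L) := by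
  obtain ⟨m', -, hm'k, rfl⟩ := (AddCircle.addOrderOf_eq_pos_iff hk).mp hu
  obtain ⟨x, hx⟩ := Int.mod_coprime hm'k
  set ζ : AddCircle L := ((L / k : ℝ) : AddCircle L)
  have hζ : addOrderOf ζ = k := AddCircle.addOrderOf_period_div hk
  have hsmul (n : ℤ) : ((L * n / k : ℝ) : AddCircle L) = n • ζ := by
    rw [← AddCircle.coe_zsmul, zsmul_eq_mul]
    ring_nf
  have hm'ζ : ((m' / k * L : ℝ) : AddCircle L) = (m' : ℤ) • ζ := by
    rw [← hsmul]
    push_cast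
    ring_nf
  set m := (r * x % k).toNat
  have hm : (m : ℤ) * m' ≡ r [ZMOD k] := by
    rw [Int.toNat_of_nonneg (Int.emod_nonneg _ (by exact_mod_cast hk.ne'))]
    calc r * x % k * m' ≡ r * x * m' [ZMOD k] := (Int.mod_modEq _ _).mul_right _
      _ = r * (m' * x) := by ring
      _ ≡ r * 1 [ZMOD k] := hx.mul_left _
      _ = r := mul_one r
  refine ⟨m, ?_, ?_⟩
  · obtain ⟨q, hq⟩ := hm.dvd
    have hcop : IsCoprime ((m : ℤ) * m') k := by
      rw [show (m : ℤ) * m' = r + k * (-q) by linarith]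
      exact hr.add_mul_left_left _
    exact Nat.isCoprime_iff_coprime.mp hcop.of_mul_left_left
  · rw [hm'ζ, hsmul, ← natCast_zsmul, smul_smul, zsmul_eq_zsmul_iff_modEq, hζ]
    exact hm

theorem stmt_6_general (k : ℕ) (hk : 3 ≤ k) (r : ℤ) (hcop : IsCoprime r (k : ℤ))
    (L : ℝ) (hL : 0 < L)
    (γ : ℝ → ℝ × ℝ) (hγ : ContDiff ℝ 2 γ)
    (hper : ∀ t : ℝ, γ (t + L) = γ t)
    (hinj : Set.InjOn γ (Set.Ico 0 L))
    (hdet : ∀ t : ℝ, det2 (γ t) (deriv γ t) = 1)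
    (A : (ℝ × ℝ) →ₗ[ℝ] (ℝ × ℝ))
    (hAk : A ^ k = 1) (hAj : ∀ j : ℕ, 0 < j → j < k → A ^ j ≠ 1)
    (hAγ : A '' Set.range γ = Set.range γ) :
    ∃ m : ℕ, Nat.Coprime m k ∧
      (∀ t : ℝ, (A ^ m) (γ t) = γ (t + L * r / k)) ∧
      (A ^ m) ^ k = 1 ∧ (∀ j : ℕ, 0 < j → j < k → (A ^ m) ^ j ≠ 1) := by
  have : Fact (0 < L) := ⟨hL⟩
  have hper : Periodic γ L := hper
  have hdiff : Differentiable ℝ γ := hγ.differentiable (by norm_num)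
  have hA (t : ℝ) : A (γ t) ∈ range γ := hAγ ▸ mem_image_of_mem A (mem_range_self t)
  have horder : orderOf A = k :=
    (orderOf_eq_iff (by omega)).mpr ⟨hAk, fun j hjk hj0 => hAj j hj0 hjk⟩
  obtain ⟨c, hc⟩ := exists_rotation hper hinj hdiff hdet hA (by omega) hAk
    (hAj 2 (by omega) (by omega))
  have hcorder : addOrderOf (c : AddCircle L) = k := by
    rw [← orderOf_eq_addOrderOf_of_forall_apply_eq hper hinj hdiff hdet hc, horder]
  obtain ⟨m, hmk, hm⟩ := AddCircle.exists_coprime_nsmul_eq (by omega) hcorder hcop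
  have hmorder : orderOf (A ^ m) = k := by
    rw [Nat.Coprime.orderOf_pow (horder ▸ hmk.symm), horder]
  refine ⟨m, hmk, fun t => ?_, hmorder ▸ pow_orderOf_eq_one _,
    fun j hj0 hjk => pow_ne_one_of_lt_orderOf hj0.ne' (hmorder ▸ hjk)⟩
  rw [pow_apply_eq_of_forall_apply_eq hc, hper.apply_eq_apply_iff hinj, AddCircle.coe_add,
    AddCircle.coe_add, ← nsmul_eq_mul, AddCircle.coe_nsmul, hm]

theorem stmt_6 (k : ℕ) (hk : 3 ≤ k) (r : ℤ) (hcop : IsCoprime r (k : ℤ))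
    (hr0 : 0 < r) (hr2 : 2 * r < (k : ℤ))
    (L : ℝ) (hL : 0 < L)
    (γ : ℝ → ℝ × ℝ) (hγ : ContDiff ℝ 2 γ)
    (hper : ∀ t : ℝ, γ (t + L) = γ t)
    (hinj : Set.InjOn γ (Set.Ico 0 L))
    (K : Set (ℝ × ℝ)) (hKcomp : IsCompact K) (hKconv : Convex ℝ K)
    (hKint : (interior K).Nonempty) (hKstrict : StrictConvex ℝ K)
    (hbd : Set.range γ = frontier K)
    (hdet : ∀ t : ℝ, det2 (γ t) (deriv γ t) = 1)
    (A : (ℝ × ℝ) →ₗ[ℝ] (ℝ × ℝ))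
    (hAk : A ^ k = 1) (hAj : ∀ j : ℕ, 0 < j → j < k → A ^ j ≠ 1)
    (hAγ : A '' Set.range γ = Set.range γ) :
    ∃ m : ℕ, Nat.Coprime m k ∧
      (∀ t : ℝ, (A ^ m) (γ t) = γ (t + L * r / k)) ∧
      (A ^ m) ^ k = 1 ∧ (∀ j : ℕ, 0 < j → j < k → (A ^ m) ^ j ≠ 1) :=
  stmt_6_general k hk r hcop L hL γ hγ hper hinj hdet A hAk hAj hAγ
end

section
/- Let γ : ℝ → ℂ be a C¹-smooth, 2π-periodic map and let a, λ ∈ ℝ. Suppose that γ(t + 2a) − γ(t) = λ·γ'(t + a) for all t ∈ ℝ. Then for every integer n with c_n(γ) ≠ 0 one has e^{2ina} − 1 = i·λ·n·e^{ina}; equivalently, λ·n = 2·sin(n·a). -/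
/-!
Taking Fourier coefficients turns the functional equation into an identity between multiples
of `c_n(γ)`: a shift by `s` multiplies `c_n` by `e^{ins}` (periodicity), and differentiation
multiplies it by `in` (integration by parts, the boundary term vanishing by periodicity).
This gives `(e^{2ina} - 1) c_n = iλn e^{ina} c_n`, and when `c_n ≠ 0` the factor `c_n`
cancels. Finally `e^{2ix} - 1 = 2i sin x · e^{ix}`.
-/

/-- The `n`-th Fourier coefficient of a `2π`-periodic function `γ : ℝ → ℂ`. -/
noncomputable def fourierCoef (γ : ℝ → ℂ) (n : ℤ) : ℂ :=
  (1 / (2 * (Real.pi : ℂ))) * ∫ t in (0 : ℝ)..(2 * Real.pi),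
    γ t * Complex.exp (-(Complex.I * n * t))

open Complex Real Function intervalIntegral

lemma Function.Periodic.deriv {𝕜 F : Type*} [NontriviallyNormedField 𝕜] [NormedAddCommGroup F]
    [NormedSpace 𝕜 F] {f : 𝕜 → F} {T : 𝕜} (hf : Periodic f T) : Periodic (deriv f) T :=
  fun t => by rw [← deriv_comp_add_const, hf.funext]

lemma periodic_exp_neg_I_int_mul (n : ℤ) :
    Periodic (fun t : ℝ => exp (-(I * n * t))) (2 * π) := fun t => by
  have h : -(I * n * ↑(t + 2 * π)) = -(I * n * t) + (-n : ℤ) * (2 * π * I) := by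
    push_cast; ring
  simp only [h, exp_periodic.int_mul (-n) _]

lemma hasDerivAt_exp_neg_I_mul (c : ℂ) (t : ℝ) :
    HasDerivAt (fun t : ℝ => exp (-(I * c * t))) (-(I * c) * exp (-(I * c * t))) t := by
  simpa [mul_comm] using (((hasDerivAt_id t).ofReal_comp).const_mul (-(I * c))).cexp

lemma fourierCoef_const_mul (c : ℂ) (f : ℝ → ℂ) (n : ℤ) :
    fourierCoef (fun t => c * f t) n = c * fourierCoef f n := by
  simp only [fourierCoef, mul_assoc, integral_const_mul]
  ring

lemma fourierCoef_sub {f g : ℝ → ℂ} (hf : Continuous f) (hg : Continuous g) (n : ℤ) :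
    fourierCoef (fun t => f t - g t) n = fourierCoef f n - fourierCoef g n := by
  have he : Continuous fun t : ℝ => exp (-(I * n * t)) := by fun_prop
  have hfi :
      IntervalIntegrable (fun t => f t * exp (-(I * n * t))) MeasureTheory.volume 0 (2 * π) :=
    (hf.mul he).intervalIntegrable _ _
  have hgi :
      IntervalIntegrable (fun t => g t * exp (-(I * n * t))) MeasureTheory.volume 0 (2 * π) :=
    (hg.mul he).intervalIntegrable _ _
  simp only [fourierCoef, sub_mul, integral_sub hfi hgi, mul_sub]

lemma fourierCoef_comp_add_right {f : ℝ → ℂ} (hf : Periodic f (2 * π)) (n : ℤ) (s : ℝ) :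
    fourierCoef (fun t => f (t + s)) n = exp (I * n * s) * fourierCoef f n := by
  have hshift (t : ℝ) : f (t + s) * exp (-(I * n * t)) =
      exp (I * n * s) * (f (t + s) * exp (-(I * n * ↑(t + s)))) := by
    rw [mul_left_comm, ← Complex.exp_add]; push_cast; ring_nf
  have hper : Periodic (fun t => f t * exp (-(I * n * t))) (2 * π) :=
    hf.mul (periodic_exp_neg_I_int_mul n)
  simp only [fourierCoef, hshift, integral_const_mul,
    integral_comp_add_right (fun t => f t * exp (-(I * n * t))), zero_add]
  rw [add_comm, hper.intervalIntegral_add_eq s 0, zero_add]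
  ring

lemma fourierCoef_deriv {f : ℝ → ℂ} (hf : ContDiff ℝ 1 f) (hper : Periodic f (2 * π))
    (n : ℤ) :
    fourierCoef (deriv f) n = I * n * fourierCoef f n := by
  have hparts := integral_mul_deriv_eq_deriv_mul (a := 0) (b := 2 * π)
    (fun t _ => (hf.differentiable one_ne_zero t).hasDerivAt)
    (fun t _ => hasDerivAt_exp_neg_I_mul n t)
    ((hf.continuous_deriv le_rfl).intervalIntegrable _ _)
    (by apply Continuous.intervalIntegrable; fun_prop)
  have hbdry : f (2 * π) * exp (-(I * n * ↑(2 * π))) = f 0 * exp (-(I * n * ↑(0:ℝ))) := by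
    simpa using hper.mul (periodic_exp_neg_I_int_mul n) 0
  simp only [mul_left_comm (f _), integral_const_mul, hbdry, sub_self, zero_sub] at hparts
  simp only [fourierCoef]
  linear_combination (1 / (2 * (π : ℂ))) * hparts

lemma exp_two_mul_I_sub_one (z : ℂ) : exp (2 * I * z) - 1 = 2 * I * sin z * exp (I * z) := by
  have hinv : exp (-z * I) * exp (z * I) = 1 := by rw [← Complex.exp_add]; simp
  have hsq : exp (2 * I * z) = exp (z * I) * exp (z * I) := by
    rw [← Complex.exp_add]; ring_nf
  rw [Complex.sin, hsq, mul_comm I z]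
  linear_combination (exp (z * I) * exp (z * I) - exp (z * I) * exp (-z * I)) * I_sq + hinv

lemma eq_two_mul_sin_of_exp_two_mul_I_sub_one {x y : ℝ}
    (h : exp (2 * I * x) - 1 = I * y * exp (I * x)) : y = 2 * Real.sin x := by
  rw [exp_two_mul_I_sub_one] at h
  have hcancel : I * y * exp (I * x) = I * (2 * Complex.sin x) * exp (I * x) := by
    linear_combination -h
  exact_mod_cast mul_left_cancel₀ I_ne_zero (mul_right_cancel₀ (exp_ne_zero _) hcancel)

theorem stmt_9 (γ : ℝ → ℂ) (hγ : ContDiff ℝ 1 γ)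
    (hper : ∀ t : ℝ, γ (t + 2 * Real.pi) = γ t)
    (a lam : ℝ)
    (heq : ∀ t : ℝ, γ (t + 2 * a) - γ t = (lam : ℂ) * deriv γ (t + a)) :
    ∀ n : ℤ, fourierCoef γ n ≠ 0 →
      (Complex.exp (2 * Complex.I * n * a) - 1 =
        Complex.I * lam * n * Complex.exp (Complex.I * n * a)) ∧
      lam * n = 2 * Real.sin (n * a) := by
  intro n hn
  have hcoef := congrArg (fourierCoef · n) (funext heq)
  have hcont : Continuous γ := hγ.continuous
  simp only [fourierCoef_sub (f := fun t => γ (t + 2 * a)) (by fun_prop) hcont,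
    fourierCoef_comp_add_right hper, fourierCoef_const_mul,
    fourierCoef_comp_add_right (Periodic.deriv hper), fourierCoef_deriv hγ hper] at hcoef
  have hexp : exp (2 * I * n * a) - 1 = I * lam * n * exp (I * n * a) := by
    rw [show I * n * ↑(2 * a) = 2 * I * n * a by push_cast; ring] at hcoef
    exact mul_right_cancel₀ hn (by linear_combination hcoef)
  refine ⟨hexp, ?_⟩
  exact_mod_cast eq_two_mul_sin_of_exp_two_mul_I_sub_one (x := n * a) (y := lam * n)
    (by push_cast; ring_nf at hexp ⊢; exact hexp)
end
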